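/- Let n ≥ 1, let Γ : ℝ → M_n(ℝ) be differentiable, let U : ℝ → M_n(ℝ) be differentiable with U'(t) = −Γ(t)U(t) and U(t) invertible for all t, and let G : ℝ × ℝⁿ → ℝⁿ. Let y : ℝ → ℝⁿ be twice differentiable and set x(t) = U(t)·y(t). If x satisfies ẍ(t) + 2Γ(t)ẋ(t) + G(t, x(t)) + Γ'(t)x(t) = 0 for all t, then ÿ(t) = U(t)⁻¹·( Γ(t)² U(t) y(t) − G(t, U(t)y(t)) ) for all t ∈ ℝ. -/

import Mathlib

/-!
Differentiating `x = U y` twice with `U' = -Γ U` gives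
`ẋ = -Γ U y + U ẏ` and `ẍ = -(Γ' U - Γ² U) y - 2 Γ U ẏ + U ÿ`.
Substituted into `ẍ + 2 Γ ẋ + G + Γ' x = 0`, the terms in `ẏ` and in `Γ'` cancel and what is
left is `U ÿ = Γ² U y - G(t, U y)`; invertibility of `U` then solves for `ÿ`.
-/

open Matrix

section EntrywiseDeriv

variable {𝕜 : Type*} [NontriviallyNormedField 𝕜] {l m n : Type*} [Fintype m] {t : 𝕜}

theorem hasDerivAt_matrix_mul_apply {A : 𝕜 → Matrix l m 𝕜} {B : 𝕜 → Matrix m n 𝕜}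
    {A' : Matrix l m 𝕜} {B' : Matrix m n 𝕜}
    (hA : ∀ i j, HasDerivAt (fun s => A s i j) (A' i j) t)
    (hB : ∀ i j, HasDerivAt (fun s => B s i j) (B' i j) t) (i : l) (j : n) :
    HasDerivAt (fun s => (A s * B s) i j) ((A' * B t + A t * B') i j) t := by
  simp only [mul_apply, Matrix.add_apply, ← Finset.sum_add_distrib]
  exact HasDerivAt.fun_sum fun k _ => (hA i k).mul (hB k j)

theorem hasDerivAt_matrix_mulVec [Fintype l] {A : 𝕜 → Matrix l m 𝕜} {A' : Matrix l m 𝕜}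
    {v : 𝕜 → m → 𝕜} {v' : m → 𝕜}
    (hA : ∀ i j, HasDerivAt (fun s => A s i j) (A' i j) t) (hv : HasDerivAt v v' t) :
    HasDerivAt (fun s => A s *ᵥ v s) (A' *ᵥ v t + A t *ᵥ v') t := by
  rw [hasDerivAt_pi] at hv ⊢
  intro i
  simp only [mulVec, dotProduct, Pi.add_apply, ← Finset.sum_add_distrib]
  exact HasDerivAt.fun_sum fun j _ => (hA i j).mul (hv j)

end EntrywiseDeriv

theorem elimination_of_velocity_terms_general
    (n : ℕ)
    (Γ U : ℝ → Matrix (Fin n) (Fin n) ℝ)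
    (hΓdiff : ∀ i j : Fin n, Differentiable ℝ (fun t => Γ t i j))
    (hU : ∀ (t : ℝ) (i j : Fin n),
      HasDerivAt (fun s => U s i j) ((-(Γ t * U t)) i j) t)
    (hUinv : ∀ t, IsUnit (U t))
    (G : ℝ × (Fin n → ℝ) → (Fin n → ℝ))
    (y : ℝ → (Fin n → ℝ))
    (hy : Differentiable ℝ y) (hy' : Differentiable ℝ (deriv y))
    (x : ℝ → (Fin n → ℝ))
    (hx : ∀ t, x t = (U t).mulVec (y t))
    (heq : ∀ t : ℝ,
      deriv (deriv x) t + (2 : ℝ) • (Γ t).mulVec (deriv x t) + G (t, x t)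
        + (Matrix.of fun i j => deriv (fun s => Γ s i j) t).mulVec (x t) = 0) :
    ∀ t : ℝ,
      deriv (deriv y) t
        = ((U t)⁻¹).mulVec ((Γ t ^ 2).mulVec ((U t).mulVec (y t))
            - G (t, (U t).mulVec (y t))) := by
  intro t
  have hmotion := heq t
  set Γ' := Matrix.of fun i j => deriv (fun s => Γ s i j) t
  have hx_eq : x = fun s => U s *ᵥ y s := funext hx
  have hderiv_x : deriv x = fun s => -(Γ s * U s) *ᵥ y s + U s *ᵥ deriv y s := by
    ext1 s
    rw [hx_eq]
    exact (hasDerivAt_matrix_mulVec (hU s) (hy s).hasDerivAt).deriv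
  have hΓU : ∀ i j, HasDerivAt (fun s => (-(Γ s * U s)) i j)
      ((-(Γ' * U t + Γ t * -(Γ t * U t))) i j) t := fun i j =>
    (hasDerivAt_matrix_mul_apply (fun i j => (hΓdiff i j t).hasDerivAt) (hU t) i j).neg
  have hderiv2_x : deriv (deriv x) t
      = -(Γ' * U t + Γ t * -(Γ t * U t)) *ᵥ y t + -(Γ t * U t) *ᵥ deriv y t
        + (-(Γ t * U t) *ᵥ deriv y t + U t *ᵥ deriv (deriv y) t) := by
    rw [hderiv_x]
    exact ((hasDerivAt_matrix_mulVec hΓU (hy t).hasDerivAt).add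
      (hasDerivAt_matrix_mulVec (hU t) (hy' t).hasDerivAt)).deriv
  have hUy'' : U t *ᵥ deriv (deriv y) t = (Γ t ^ 2) *ᵥ (U t *ᵥ y t) - G (t, U t *ᵥ y t) := by
    rw [hderiv2_x, congrFun hderiv_x t, hx t] at hmotion
    simp only [neg_mulVec, add_mulVec, mul_neg, mulVec_add, mulVec_neg, mulVec_mulVec,
      two_smul] at hmotion
    rw [mulVec_mulVec, sq, mul_assoc]
    linear_combination hmotion
  have := (hUinv t).invertible
  exact (inv_mulVec_eq_vec hUy''.symm).symm

theorem elimination_of_velocity_terms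
    (n : ℕ) (hn : 1 ≤ n)
    (Γ U : ℝ → Matrix (Fin n) (Fin n) ℝ)
    (hΓdiff : ∀ i j : Fin n, Differentiable ℝ (fun t => Γ t i j))
    (hU : ∀ (t : ℝ) (i j : Fin n),
      HasDerivAt (fun s => U s i j) ((-(Γ t * U t)) i j) t)
    (hUinv : ∀ t, IsUnit (U t))
    (G : ℝ × (Fin n → ℝ) → (Fin n → ℝ))
    (y : ℝ → (Fin n → ℝ))
    (hy : Differentiable ℝ y) (hy' : Differentiable ℝ (deriv y))
    (x : ℝ → (Fin n → ℝ))
    (hx : ∀ t, x t = (U t).mulVec (y t))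
    (heq : ∀ t : ℝ,
      deriv (deriv x) t + (2 : ℝ) • (Γ t).mulVec (deriv x t) + G (t, x t)
        + (Matrix.of fun i j => deriv (fun s => Γ s i j) t).mulVec (x t) = 0) :
    ∀ t : ℝ,
      deriv (deriv y) t
        = ((U t)⁻¹).mulVec ((Γ t ^ 2).mulVec ((U t).mulVec (y t))
            - G (t, (U t).mulVec (y t))) :=
  elimination_of_velocity_terms_general n Γ U hΓdiff hU hUinv G y hy hy' x hx heq
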